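/- Let g = sl_{n+1}(ℂ) and let k ∈ ℚ be an admissible number for g. Let λ ∈ Pr̄_k and μ ∈ W·λ. Then μ ∈ Pr̄_k if and only if μ = w^{-1}·λ for some element w ∈ W^λ, where W^λ = {w ∈ W : Δ_+ ∩ w(−Δ_+) ⊆ Δ_+ \ Δ(λ)} and Δ(λ) = {α ∈ Δ : ⟨λ+ρ,α^∨⟩ ∈ ℤ} is the integral root system of λ. -/

import Mathlib

/-!
Combinatorial model for the paper "Admissible representations of simple affine
vertex algebras" for `g = sl_{n+1}(ℂ)`.

* `Weight n` models `h*` (linear functionals on diagonal matrices; every notion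
  used below depends only on differences of coordinates, hence is well defined
  on the honest `h*`, the quotient by the constants).
* `Weyl n` is the Weyl group `S_{n+1}` of `sl_{n+1}`.
* `Root n` is the root system: pairs `(i,j)`, `i ≠ j`, representing `ε_i - ε_j`.
-/

namespace PaperSL

noncomputable section

abbrev Weight (n : ℕ) := Fin (n + 1) → ℂ

abbrev Weyl (n : ℕ) := Equiv.Perm (Fin (n + 1))

structure Root (n : ℕ) where
  i : Fin (n + 1)
  j : Fin (n + 1)
  ne : i ≠ j

variable {n : ℕ}

/-- the pairing `⟨μ, α^∨⟩` for `α = ε_i - ε_j`. -/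
def rpair (μ : Weight n) (α : Root n) : ℂ := μ α.i - μ α.j

/-- `α` is a positive root (w.r.t. the standard Borel subalgebra). -/
def Root.IsPos (α : Root n) : Prop := α.i < α.j

/-- (a representative of) the Weyl vector `ρ`:  `⟨ρ, α^∨⟩ = 1` for simple `α`. -/
def rho (n : ℕ) : Weight n := fun i => -((i : ℕ) : ℂ)

/-- action of the Weyl group on weights. -/
def wAct (w : Weyl n) (μ : Weight n) : Weight n := fun i => μ (w⁻¹ i)

/-- action of the Weyl group on roots. -/
def rAct (w : Weyl n) (α : Root n) : Root n :=
  ⟨w α.i, w α.j, fun h => α.ne (w.injective h)⟩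

/-- the dot action `w · λ = w(λ + ρ) - ρ`. -/
def dot (w : Weyl n) (μ : Weight n) : Weight n := wAct w (μ + rho n) - rho n

/-- `z ∈ ℤ ⊆ ℂ`. -/
def IsInt (z : ℂ) : Prop := ∃ m : ℤ, z = (m : ℂ)

/-- `z ∈ ℕ₀ = {0,1,2,…} ⊆ ℂ`. -/
def IsNat (z : ℂ) : Prop := ∃ m : ℕ, z = (m : ℂ)

/-- `z ∈ ℕ = {1,2,…} ⊆ ℂ`. -/
def IsPosInt (z : ℂ) : Prop := ∃ m : ℕ, z = (m : ℂ) + 1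

/-- `μ` is dominant: `⟨μ + ρ, α^∨⟩ ∉ -ℕ` for all positive roots `α`. -/
def IsDominant (μ : Weight n) : Prop :=
  ∀ α : Root n, α.IsPos → ¬ IsPosInt (-(rpair (μ + rho n) α))

/-- the simple root `α_{r+1} = ε_r - ε_{r+1}` (`0`-indexed). -/
def simple (r : Fin n) : Root n :=
  ⟨r.castSucc, r.succ, by
    simp only [ne_eq, Fin.ext_iff, Fin.coe_castSucc, Fin.val_succ]
    omega⟩

/-- the simple reflection `s_{α_{r+1}}`, i.e. the transposition `(r, r+1)`. -/
def srefl (r : Fin n) : Weyl n := Equiv.swap r.castSucc r.succ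

/-- (a representative of) the fundamental weight `ω_{r+1}` (`0`-indexed). -/
def fw (r : Fin n) : Weight n := fun i => if (i : ℕ) ≤ (r : ℕ) then 1 else 0

/-- the root `-θ`, the negative of the highest root `θ = ε_0 - ε_n`. -/
def negTheta (hn : 0 < n) : Root n :=
  ⟨Fin.last n, 0, by
    simp only [ne_eq, Fin.ext_iff, Fin.val_last, Fin.val_zero]
    omega⟩

/-! Real affine roots `α + mδ` of `ŝl_{n+1}`, modeled as pairs `(α, m)`. -/

abbrev ARoot (n : ℕ) := Root n × ℤ

/-- positivity of real affine roots. -/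
def ARoot.IsPos (β : ARoot n) : Prop := 0 < β.2 ∨ (β.2 = 0 ∧ β.1.IsPos)

/-- `⟨λ + kΛ₀ + ρ̂, (α + mδ)^∨⟩ = ⟨λ + ρ, α^∨⟩ + m(k + h^∨)`, `h^∨ = n + 1`. -/
def apair (k : ℚ) (μ : Weight n) (β : ARoot n) : ℂ :=
  rpair (μ + rho n) β.1 + (β.2 : ℂ) * ((k : ℂ) + (n : ℂ) + 1)

/-- the integral root system `Δ̂(λ + kΛ₀)`. -/
def aIntegral (k : ℚ) (μ : Weight n) : Set (ARoot n) := {β | IsInt (apair k μ β)}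

/-- `λ + kΛ₀` is regular dominant: `⟨λ + kΛ₀ + ρ̂, β^∨⟩ ∉ -ℕ₀` for positive `β`. -/
def IsRegDominantAff (k : ℚ) (μ : Weight n) : Prop :=
  ∀ β : ARoot n, ARoot.IsPos β → ¬ IsNat (-(apair k μ β))

/-- a real affine root as a rational vector (finite part, coefficient of `δ`). -/
def ARoot.vec (β : ARoot n) : (Fin (n + 1) → ℚ) × ℚ :=
  (fun t => (if t = β.1.i then 1 else 0) - (if t = β.1.j then 1 else 0), (β.2 : ℚ))

/-- the `ℚ`-span of `Δ̂(λ + kΛ₀)` contains all real affine roots. -/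
def SpanFull (k : ℚ) (μ : Weight n) : Prop :=
  ∀ β : ARoot n, ARoot.vec β ∈ Submodule.span ℚ (ARoot.vec '' aIntegral k μ)

/-- `λ + kΛ₀` is an admissible weight (Kac–Wakimoto). -/
def IsAdmissibleWeight (k : ℚ) (μ : Weight n) : Prop :=
  IsRegDominantAff k μ ∧ SpanFull k μ

/-- the action of `w t_{-η}` (a general element of the extended affine Weyl group
`W̃ = W ⋉ P^∨`) on real affine roots: `w t_{-η}(α + mδ) = w(α) + (m + (η,α))δ`.
A coweight `η ∈ P^∨` is modeled by an integer-valued function on coordinates. -/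
def aAct (w : Weyl n) (η : Fin (n + 1) → ℤ) (β : ARoot n) : ARoot n :=
  (rAct w β.1, β.2 + (η β.1.i - η β.1.j))

/-- `Pr̄_k`: the projections to `h*` of the admissible weights `λ` of level `k`
with `Δ̂(λ) = y(Δ̂(kΛ₀))` for some `y ∈ W̃`. -/
def Pr (n : ℕ) (k : ℚ) : Set (Weight n) :=
  {μ | IsAdmissibleWeight k μ ∧
    ∃ (w : Weyl n) (η : Fin (n + 1) → ℤ),
      aIntegral k μ = aAct w η '' aIntegral k (0 : Weight n)}

/-- `k` is an admissible number for `sl_{n+1}` with numerator `p`, denominator `q`: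
`k + n + 1 = p/q`, `p,q ∈ ℕ`, `(p,q) = 1`, `p ≥ n+1`. -/
def IsAdmissibleNum (n : ℕ) (k : ℚ) (p q : ℕ) : Prop :=
  0 < p ∧ 0 < q ∧ Nat.Coprime p q ∧ n + 1 ≤ p ∧ (k + (n : ℚ) + 1) = (p : ℚ) / (q : ℚ)

/-- `k` is an admissible number for `sl_{n+1}`. -/
def IsAdmissible (n : ℕ) (k : ℚ) : Prop := ∃ p q : ℕ, IsAdmissibleNum n k p q

/-- the integral root system `Δ(λ) = {α ∈ Δ : ⟨λ+ρ, α^∨⟩ ∈ ℤ}`. -/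
def fIntegral (μ : Weight n) : Set (Root n) := {α | IsInt (rpair (μ + rho n) α)}

/-- the root subsystem `Δ_Σ` generated by a subset `Σ` of the simple roots
(a standard parabolic subalgebra is modeled by its set `Σ` of simple roots). -/
def DeltaSigma (Sg : Finset (Fin n)) : Set (Root n) :=
  {α | ∀ t : Fin n, min (α.i : ℕ) (α.j : ℕ) ≤ (t : ℕ) →
    (t : ℕ) < max (α.i : ℕ) (α.j : ℕ) → t ∈ Sg}

/-- `W^λ` resp. `W^p`: `{w ∈ W : Δ₊ ∩ w(-Δ₊) ⊆ Δ₊ \ S}` for `S = Δ(λ)` resp. `Δ_Σ`. -/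
def WSet (S : Set (Root n)) : Set (Weyl n) :=
  {w | ∀ α : Root n, α.IsPos → ¬ (rAct w⁻¹ α).IsPos → α ∉ S}

/-- `Pr̄_{k,ℤ} = {λ : ⟨λ, α_i^∨⟩ ∈ ℕ₀ ∀ i, ⟨λ, θ^∨⟩ ≤ p - n - 1}`, `p = (k+n+1)q`. -/
def PrZ (n p : ℕ) : Set (Weight n) :=
  {μ | (∀ r : Fin n, IsNat (rpair μ (simple r))) ∧
    ∃ m : ℕ, μ 0 - μ (Fin.last n) = (m : ℂ) ∧ m + (n + 1) ≤ p}

/-- `(η, α)` for a coweight `η` and a root `α`. -/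
def cpair (η : Fin (n + 1) → ℤ) (α : Root n) : ℤ := η α.i - η α.j

/-- `η ∈ P₊^∨` (dominant coweight). -/
def IsDomCoweight (η : Fin (n + 1) → ℤ) : Prop := ∀ r : Fin n, η r.succ ≤ η r.castSucc

/-- `(η, θ)` for the highest root `θ`. -/
def cTheta (η : Fin (n + 1) → ℤ) : ℤ := η 0 - η (Fin.last n)

/-- `Π^η = {α ∈ Π : (η, α) = 0}`. -/
def PiEta (η : Fin (n + 1) → ℤ) : Finset (Fin n) :=
  Finset.univ.filter fun r => η r.castSucc = η r.succ

/-- a coweight regarded as an element of `h*` (via the normalized bilinear form). -/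
def coToW (η : Fin (n + 1) → ℤ) : Weight n := fun i => ((η i : ℤ) : ℂ)

/-- `Λ_k(p) = {λ - (k+n+1)η : λ ∈ Pr̄_{k,ℤ}, η ∈ P₊^∨, (η,θ) ≤ q-1, Π^η = Σ_p}`. -/
def Lam (n : ℕ) (k : ℚ) (p q : ℕ) (Sg : Finset (Fin n)) : Set (Weight n) :=
  {ν | ∃ μ ∈ PrZ n p, ∃ η : Fin (n + 1) → ℤ,
    IsDomCoweight η ∧ cTheta η ≤ (q : ℤ) - 1 ∧ PiEta η = Sg ∧
    ν = μ - ((k : ℂ) + (n : ℂ) + 1) • coToW η}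

/-- the saturation of a set of weights under the dot action of `W`; the image of
`S` in the quotient `[Pr̄_k] = Pr̄_k/∼` is faithfully encoded by `dotOrbitSat S`. -/
def dotOrbitSat (S : Set (Weight n)) : Set (Weight n) :=
  {ν | ∃ μ ∈ S, ∃ w : Weyl n, ν = dot w μ}

/-- the set `{α_1, …, α_n, -θ}`. -/
def extSet (hn : 0 < n) : Set (Root n) := Set.range simple ∪ {negTheta hn}

/-- `w = w_j`: the unique element of `W` preserving `{α_1,…,α_n,-θ}` with
`w(-θ) = α_j` (here `j : Fin n` is `0`-indexed). -/
def IsWj (hn : 0 < n) (w : Weyl n) (j : Fin n) : Prop :=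
  rAct w '' extSet hn = extSet hn ∧ rAct w (negTheta hn) = simple j

/-- the subgroup `W₊ = ⟨w_1, …, w_n⟩` of `W`. -/
def WPlus (hn : 0 < n) : Subgroup (Weyl n) :=
  Subgroup.closure {w | ∃ j : Fin n, IsWj hn w j}

/-- `w(Σ_p) = Σ_p` as sets of simple roots. -/
def fixesSigma (w : Weyl n) (Sg : Finset (Fin n)) : Prop :=
  rAct w '' (simple '' (Sg : Set (Fin n))) = simple '' (Sg : Set (Fin n))

/-- `W₊^p = {w ∈ W₊ : w(Σ_p) = Σ_p}`. -/
def WPlusP (hn : 0 < n) (Sg : Finset (Fin n)) : Set (Weyl n) :=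
  {w | w ∈ WPlus hn ∧ fixesSigma w Sg}

/-- `p_{Σ₁} ∼ p_{Σ₂}`: the root subsystems `Δ_{Σ₁}` and `Δ_{Σ₂}` are `W`-conjugate. -/
def DeltaConj (S1 S2 : Finset (Fin n)) : Prop :=
  ∃ w : Weyl n, DeltaSigma S1 = rAct w '' DeltaSigma S2

/-! Partitions (as multisets), Richardson orbits. -/

/-- the cut positions of the Levi blocks of the parabolic with simple roots `Σ`. -/
def cuts (Sg : Finset (Fin n)) : Finset ℕ :=
  insert 0 (insert (n + 1) ((Finset.univ \ Sg).image fun r : Fin n => (r : ℕ) + 1))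

/-- the block sizes of the Levi subalgebra of the parabolic with simple roots `Σ`
(a partition of `n+1`). -/
def blockSizes (Sg : Finset (Fin n)) : Multiset ℕ :=
  (((((cuts Sg).sort (· ≤ ·)).zip ((cuts Sg).sort (· ≤ ·)).tail).map
    fun ab => ab.2 - ab.1 : List ℕ) : Multiset ℕ)

/-- the transpose of a partition given as a multiset. -/
def transposeM (μ : Multiset ℕ) : Multiset ℕ :=
  Multiset.filter (fun c => 0 < c)
    (((List.range μ.sum).map fun j =>
      Multiset.card (μ.filter fun x => j + 1 ≤ x) : List ℕ) : Multiset ℕ)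

/-- the partition of the Richardson orbit `O_{p_Σ}` attached to the standard
parabolic subalgebra with simple roots `Σ`: the transpose of the Levi block sizes. -/
def richardson (Sg : Finset (Fin n)) : Multiset ℕ := transposeM (blockSizes Sg)

/-- the set `Σ_μ` of simple roots of the standard parabolic subalgebra `p_μ`
attached to a partition `μ` of `n+1`: the complement of the partial sums of the
(decreasingly ordered) parts. -/
def sigmaOfPartition (μ : Multiset ℕ) : Finset (Fin n) :=
  Finset.univ.filter fun r : Fin n =>
    ((r : ℕ) + 1) ∉ List.scanl (· + ·) 0 (μ.sort (· ≤ ·)).reverse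

/-- the length function on `W = S_{n+1}` (number of inversions). -/
def len (w : Weyl n) : ℕ :=
  (Finset.univ.filter fun pr : Fin (n + 1) × Fin (n + 1) =>
    pr.1 < pr.2 ∧ w pr.2 < w pr.1).card

/-- the coefficients in `w_j(∑ λ_i ω_i) = ∑_{i<j} λ_{n+1+i-j} ω_i - (∑ λ_i) ω_j
+ ∑_{i>j} λ_{i-j} ω_i` (all `0`-indexed). -/
def twCoeff (lamb : Fin n → ℂ) (j i : Fin n) : ℂ :=
  if _ : (i : ℕ) < (j : ℕ) then
    lamb ⟨n + (i : ℕ) - (j : ℕ), by have := j.isLt; omega⟩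
  else if (i : ℕ) = (j : ℕ) then -(∑ t, lamb t)
  else lamb ⟨(i : ℕ) - (j : ℕ) - 1, by have := i.isLt; omega⟩

/-!
The dot action of `v ∈ W` moves the affine integral root system by `v`: `Δ̂(v·λ) = v Δ̂(λ)`.
Hence the span condition and the `W̃`-conjugacy to `Δ̂(kΛ₀)` pass from `λ` to every `v·λ`, and
only regular dominance can fail. For `v = w⁻¹`, the pairings with the affine roots `α + mδ`,
`m > 0`, are pairings of `λ` with such roots again, so only finite roots matter. A positive `α`
with `wα` negative pairs with `w⁻¹·λ + ρ` as `-γ` does with `λ + ρ`, where `γ = -wα > 0` and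
`w⁻¹γ < 0`; as `λ` is regular dominant, `⟨λ + ρ, γ^∨⟩` is in `ℕ` as soon as it is an integer, so
dominance fails exactly when such a `γ` lies in `Δ(λ)`.
-/

attribute [ext] Root

instance : Neg (Root n) := ⟨fun α => ⟨α.j, α.i, α.ne.symm⟩⟩

@[simp] lemma Root.neg_i (α : Root n) : (-α).i = α.j := rfl

@[simp] lemma Root.neg_j (α : Root n) : (-α).j = α.i := rfl

lemma Root.isPos_neg_iff (α : Root n) : (-α).IsPos ↔ ¬ α.IsPos :=
  ⟨fun h h' => lt_asymm h h', fun h => lt_of_le_of_ne (not_lt.1 h) α.ne.symm⟩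

lemma rpair_neg (μ : Weight n) (α : Root n) : rpair μ (-α) = -rpair μ α := by
  simp [rpair]

lemma rAct_neg (w : Weyl n) (α : Root n) : rAct w (-α) = -rAct w α := rfl

@[simp] lemma rAct_inv_rAct (w : Weyl n) (α : Root n) : rAct w⁻¹ (rAct w α) = α := by
  ext <;> simp [rAct]

@[simp] lemma rAct_rAct_inv (w : Weyl n) (α : Root n) : rAct w (rAct w⁻¹ α) = α := by
  ext <;> simp [rAct]

lemma IsNat.isInt {z : ℂ} (h : IsNat z) : IsInt z :=
  let ⟨m, hm⟩ := h; ⟨m, by simp [hm]⟩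

lemma dot_add_rho (w : Weyl n) (μ : Weight n) : dot w μ + rho n = wAct w (μ + rho n) := by
  simp [dot]

lemma aAct_aAct (v w : Weyl n) (η : Fin (n + 1) → ℤ) (β : ARoot n) :
    aAct v 0 (aAct w η β) = aAct (v * w) η β := by
  simp [aAct, rAct]

lemma aAct_one_zero (β : ARoot n) : aAct 1 0 β = β := by
  simp [aAct, rAct]

lemma apair_dot (k : ℚ) (w : Weyl n) (μ : Weight n) (β : ARoot n) :
    apair k (dot w μ) β = apair k μ (aAct w⁻¹ 0 β) := by
  simp only [apair, dot_add_rho, aAct]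
  simp [rpair, wAct, rAct]

lemma aIntegral_dot (k : ℚ) (w : Weyl n) (μ : Weight n) :
    aIntegral k (dot w μ) = aAct w 0 '' aIntegral k μ := by
  have hleft : Function.LeftInverse (aAct w⁻¹ 0) (aAct w 0) := fun β => by
    rw [aAct_aAct, inv_mul_cancel, aAct_one_zero]
  have hright : Function.RightInverse (aAct w⁻¹ 0) (aAct w 0) := fun β => by
    rw [aAct_aAct, mul_inv_cancel, aAct_one_zero]
  rw [Set.image_eq_preimage_of_inverse hleft hright]
  ext β
  simp only [aIntegral, Set.mem_preimage, apair_dot]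
  rfl

lemma vec_aAct_zero (w : Weyl n) (β : ARoot n) :
    (aAct w 0 β).vec = ((LinearMap.funLeft ℚ ℚ ⇑w⁻¹).prodMap LinearMap.id) β.vec := by
  refine Prod.ext (funext fun t => ?_) (by simp [ARoot.vec, aAct])
  simp [ARoot.vec, aAct, rAct, LinearMap.funLeft_apply, ← Equiv.symm_apply_eq]

lemma spanFull_dot {k : ℚ} {μ : Weight n} (h : SpanFull k μ) (w : Weyl n) :
    SpanFull k (dot w μ) := by
  intro β
  set L := (LinearMap.funLeft ℚ ℚ ⇑w⁻¹).prodMap (LinearMap.id : ℚ →ₗ[ℚ] ℚ)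
  have hβ : β.vec = L (aAct w⁻¹ 0 β).vec := by
    rw [← vec_aAct_zero, aAct_aAct, mul_inv_cancel, aAct_one_zero]
  have hspan : ARoot.vec '' aIntegral k (dot w μ) = L '' (ARoot.vec '' aIntegral k μ) := by
    simp only [aIntegral_dot, Set.image_image, vec_aAct_zero, L]
  rw [hspan, hβ]
  exact Submodule.apply_mem_span_image_of_mem_span L (h _)

lemma IsRegDominantAff.isNat_of_isInt {k : ℚ} {μ : Weight n} (h : IsRegDominantAff k μ)
    {α : Root n} (hα : α.IsPos) (hint : IsInt (rpair (μ + rho n) α)) :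
    IsNat (rpair (μ + rho n) α) := by
  obtain ⟨m, hm⟩ := hint
  have hnot := h (α, 0) (Or.inr ⟨rfl, hα⟩)
  simp only [apair, hm, Int.cast_zero, zero_mul, add_zero] at hnot
  rcases Int.eq_nat_or_neg m with ⟨t, rfl | rfl⟩
  · exact ⟨t, by simp [hm]⟩
  · exact absurd ⟨t, by simp⟩ hnot

lemma isRegDominantAff_dot_inv_iff {k : ℚ} {lam : Weight n} (hlam : IsRegDominantAff k lam)
    (w : Weyl n) : IsRegDominantAff k (dot w⁻¹ lam) ↔ w ∈ WSet (fIntegral lam) := by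
  constructor
  · intro hmu α hα hwα hint
    obtain ⟨t, ht⟩ := hlam.isNat_of_isInt hα hint
    have hneg := hmu (-rAct w⁻¹ α, 0) (Or.inr ⟨rfl, (Root.isPos_neg_iff _).2 hwα⟩)
    rw [apair_dot, inv_inv] at hneg
    simp only [aAct, ← rAct_neg, rAct_rAct_inv, apair, rpair_neg, Pi.zero_apply, sub_self,
      add_zero, Int.cast_zero, zero_mul, neg_neg] at hneg
    exact hneg ⟨t, ht⟩
  · rintro hw ⟨α, m⟩ (hm | ⟨rfl, hα⟩)
    · rw [apair_dot, inv_inv]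
      exact hlam _ (Or.inl (by simpa [aAct] using hm))
    · rw [apair_dot, inv_inv]
      by_cases hwα : (rAct w α).IsPos
      · exact hlam _ (Or.inr ⟨by simp [aAct], by simpa [aAct] using hwα⟩)
      · have hnint := hw (-rAct w α) ((Root.isPos_neg_iff _).2 hwα)
          (by rw [rAct_neg, rAct_inv_rAct, Root.isPos_neg_iff, not_not]; exact hα)
        intro hnat
        refine hnint (IsNat.isInt ?_)
        simpa [aAct, apair, rpair_neg] using hnat

lemma dot_mem_Pr_iff {k : ℚ} {lam : Weight n} (hlam : lam ∈ Pr n k) (w : Weyl n) :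
    dot w lam ∈ Pr n k ↔ IsRegDominantAff k (dot w lam) := by
  obtain ⟨⟨-, hspan⟩, v, η, hv⟩ := hlam
  refine ⟨fun h => h.1.1, fun h => ⟨⟨h, spanFull_dot hspan w⟩, w * v, η, ?_⟩⟩
  rw [aIntegral_dot, hv, Set.image_image]
  simp only [aAct_aAct]

theorem statement1_general (n : ℕ) (k : ℚ)
    (lam mu : Weight n) (hlam : lam ∈ Pr n k)
    (hmu : ∃ w : Weyl n, mu = dot w lam) :
    mu ∈ Pr n k ↔ ∃ w ∈ WSet (fIntegral lam), mu = dot w⁻¹ lam := by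
  obtain ⟨v, rfl⟩ := hmu
  have hRd := hlam.1.1
  rw [dot_mem_Pr_iff hlam]
  constructor
  · intro h
    rw [← inv_inv v] at h
    exact ⟨v⁻¹, (isRegDominantAff_dot_inv_iff hRd v⁻¹).1 h, by rw [inv_inv]⟩
  · rintro ⟨w, hw, hv⟩
    exact hv ▸ (isRegDominantAff_dot_inv_iff hRd w).2 hw

/-- Let `λ ∈ Pr̄_k` and `μ ∈ W·λ`.  Then `μ ∈ Pr̄_k` if and only
if `μ = w⁻¹·λ` for some `w ∈ W^λ = {w : Δ₊ ∩ w(-Δ₊) ⊆ Δ₊ \ Δ(λ)}`. -/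
theorem statement1 (n : ℕ) (hn : 0 < n) (k : ℚ) (hk : IsAdmissible n k)
    (lam mu : Weight n) (hlam : lam ∈ Pr n k)
    (hmu : ∃ w : Weyl n, mu = dot w lam) :
    mu ∈ Pr n k ↔ ∃ w ∈ WSet (fIntegral lam), mu = dot w⁻¹ lam :=
  statement1_general n k lam mu hlam hmu

end

end PaperSL
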